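/- Let A be a positive self-adjoint operator on L²(X,μ) with F(λ) = ‖χ_A([0,λ])‖_{1,∞} finite. If f is a nonzero function of finite energy supported in a domain Ω of finite measure, then 4μ(Ω)·F(8E(f)/‖f‖₂²) ≥ 1. -/

import Mathlib

/-! With `λ = 8 E(f) / ‖f‖²`, Chebyshev's inequality for the spectral measure `ν_f` leaves at most
`‖f‖² / 8` of its total mass `‖f‖²` above `λ`, so `⟨χ_A([0,λ]) f, f⟩ ≥ 7‖f‖² / 8`. On the other
hand Hölder's inequality, the `L¹ → L^∞` bound and Cauchy–Schwarz on `Ω` give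
`⟨χ_A([0,λ]) f, f⟩ ≤ ‖χ_A([0,λ]) f‖_∞ ‖f‖₁ ≤ F(λ) ‖f‖₁² ≤ F(λ) μ(Ω) ‖f‖²`,
hence `μ(Ω) F(λ) ≥ 7/8`. -/

open MeasureTheory Set
open scoped ENNReal InnerProductSpace

variable {X : Type*} [MeasurableSpace X]

/-- The `L¹ → L^∞` operator norm of an operator on `L²`, computed on `L¹ ∩ L²`. -/
noncomputable def opNorm1infty (μ : Measure X) (T : Lp ℝ 2 μ →L[ℝ] Lp ℝ 2 μ) : ℝ≥0∞ :=
  ⨆ (f : Lp ℝ 2 μ) (_ : eLpNorm (⇑f) 1 μ ≤ 1), eLpNorm (⇑(T f)) ⊤ μ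

theorem ae_nonneg_of_measure_Iio_eq_zero {ν : Measure ℝ} (h : ν (Iio 0) = 0) :
    ∀ᵐ x ∂ν, 0 ≤ x := by
  rw [ae_iff]
  simp only [not_le]
  exact h

theorem measure_Ioi_integral_div_le {ν : Measure ℝ} (hν0 : ν (Iio 0) = 0)
    (hint : Integrable (fun x => x) ν) {c : ℝ} (hc : 0 < c) :
    ν (Ioi ((∫ x, x ∂ν) / c)) ≤ ENNReal.ofReal c := by
  have hnn := ae_nonneg_of_measure_Iio_eq_zero hν0
  rcases (integral_nonneg_of_ae hnn).eq_or_lt with hzero | hpos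
  · have hae : (fun x => x) =ᵐ[ν] 0 := (integral_eq_zero_iff_of_nonneg_ae hnn hint).1 hzero.symm
    rw [← hzero, zero_div]
    exact (measure_mono_null (fun x (hx : 0 < x) => hx.ne') (ae_iff.1 hae)).trans_le zero_le
  · calc ν (Ioi ((∫ x, x ∂ν) / c))
        ≤ ν {x | ENNReal.ofReal ((∫ x, x ∂ν) / c) ≤ ENNReal.ofReal x} :=
          measure_mono fun x hx => ENNReal.ofReal_le_ofReal (le_of_lt hx)
      _ ≤ (∫⁻ x, ENNReal.ofReal x ∂ν) / ENNReal.ofReal ((∫ x, x ∂ν) / c) :=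
          meas_ge_le_lintegral_div ENNReal.measurable_ofReal.aemeasurable
            (ENNReal.ofReal_pos.2 (by positivity)).ne' ENNReal.ofReal_ne_top
      _ = ENNReal.ofReal c := by
          rw [← ofReal_integral_eq_lintegral_ofReal hint hnn,
            ← ENNReal.ofReal_div_of_pos (by positivity)]
          field_simp

theorem measure_univ_sub_ofReal_le_measure_Iic {ν : Measure ℝ} (hν0 : ν (Iio 0) = 0)
    (hint : Integrable (fun x => x) ν) {c : ℝ} (hc : 0 < c) :
    ν univ - ENNReal.ofReal c ≤ ν (Iic ((∫ x, x ∂ν) / c)) := by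
  rw [tsub_le_iff_right, ← Iic_union_Ioi (a := (∫ x, x ∂ν) / c)]
  calc ν (Iic _ ∪ Ioi _) ≤ ν (Iic _) + ν (Ioi _) := measure_union_le _ _
    _ ≤ _ := by gcongr; exact measure_Ioi_integral_div_le hν0 hint hc

theorem eLpNorm_le_eLpNorm_mul_rpow_measure_of_ae_support {E : Type*} [NormedAddCommGroup E]
    {μ : Measure X} {f : X → E} {p q : ℝ≥0∞} (hpq : p ≤ q) (hf : AEStronglyMeasurable f μ)
    {s : Set X} (hsupp : ∀ᵐ x ∂μ, x ∉ s → f x = 0) :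
    eLpNorm f p μ ≤ eLpNorm f q μ * μ s ^ (1 / p.toReal - 1 / q.toReal) := by
  set t := toMeasurable μ s
  have hft : f =ᵐ[μ] t.indicator f := by
    filter_upwards [hsupp] with x hx
    by_cases hxt : x ∈ t
    · rw [indicator_of_mem hxt]
    · rw [indicator_of_notMem hxt, hx fun hxs => hxt (subset_toMeasurable μ s hxs)]
  calc eLpNorm f p μ = eLpNorm f p (μ.restrict t) := by
        rw [eLpNorm_congr_ae hft,
          eLpNorm_indicator_eq_eLpNorm_restrict (measurableSet_toMeasurable μ s)]
    _ ≤ eLpNorm f q (μ.restrict t) * (μ.restrict t) univ ^ (1 / p.toReal - 1 / q.toReal) :=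
        eLpNorm_le_eLpNorm_mul_rpow_measure_univ hpq hf.restrict
    _ ≤ eLpNorm f q μ * μ s ^ (1 / p.toReal - 1 / q.toReal) := by
        rw [Measure.restrict_apply_univ, measure_toMeasurable]
        gcongr
        exact Measure.restrict_le_self

theorem eLpNorm_one_sq_le_measure_mul_eLpNorm_two_sq {E : Type*} [NormedAddCommGroup E]
    {μ : Measure X} {f : X → E} (hf : AEStronglyMeasurable f μ)
    {s : Set X} (hsupp : ∀ᵐ x ∂μ, x ∉ s → f x = 0) :
    eLpNorm f 1 μ ^ 2 ≤ μ s * eLpNorm f 2 μ ^ 2 := by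
  have h := eLpNorm_le_eLpNorm_mul_rpow_measure_of_ae_support (p := 1) (q := 2) one_le_two hf hsupp
  have hsq : (μ s ^ (1 / 2 : ℝ)) ^ 2 = μ s := by
    rw [← ENNReal.rpow_natCast, ← ENNReal.rpow_mul]
    norm_num
  calc eLpNorm f 1 μ ^ 2 ≤ (eLpNorm f 2 μ * μ s ^ (1 / 2 : ℝ)) ^ 2 := by
        gcongr; convert h using 3; norm_num
    _ = μ s * eLpNorm f 2 μ ^ 2 := by rw [mul_pow, hsq, mul_comm]

theorem eLpNorm_coeFn_smul {μ : Measure X} {p : ℝ≥0∞} (c : ℝ) (f : Lp ℝ p μ) (q : ℝ≥0∞) :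
    eLpNorm ⇑(c • f) q μ = ‖c‖ₑ * eLpNorm f q μ := by
  rw [eLpNorm_congr_ae (Lp.coeFn_smul c f), eLpNorm_const_smul]

theorem eLpNorm_apply_le_opNorm1infty_mul {μ : Measure X} (T : Lp ℝ 2 μ →L[ℝ] Lp ℝ 2 μ)
    (f : Lp ℝ 2 μ) (hf : eLpNorm f 1 μ ≠ ⊤) :
    eLpNorm (T f) ⊤ μ ≤ opNorm1infty μ T * eLpNorm f 1 μ := by
  set c := eLpNorm f 1 μ
  rcases eq_or_ne c 0 with h0 | h0
  · have : f = 0 := Lp.eq_zero_iff_ae_eq_zero.2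
      ((eLpNorm_eq_zero_iff (Lp.aestronglyMeasurable f) one_ne_zero).1 h0)
    rw [this, map_zero, eLpNorm_congr_ae (Lp.coeFn_zero _ _ _), eLpNorm_zero]
    exact zero_le
  have hc : ‖c.toReal⁻¹‖ₑ = c⁻¹ := by
    rw [enorm_inv (ENNReal.toReal_pos h0 hf).ne', Real.enorm_of_nonneg ENNReal.toReal_nonneg,
      ENNReal.ofReal_toReal hf]
  -- test `T` against the `L¹`-normalised function `f / ‖f‖₁`
  have hunit : eLpNorm ⇑(c.toReal⁻¹ • f) 1 μ ≤ 1 := by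
    rw [eLpNorm_coeFn_smul, hc, ENNReal.inv_mul_cancel h0 hf]
  have h : eLpNorm (T (c.toReal⁻¹ • f)) ⊤ μ ≤ opNorm1infty μ T := le_iSup₂_of_le _ hunit le_rfl
  rwa [map_smul, eLpNorm_coeFn_smul, hc, ENNReal.inv_mul_le_iff h0 hf, mul_comm] at h

theorem ofReal_inner_le_eLpNorm_top_mul_eLpNorm_one {μ : Measure X} (g f : Lp ℝ 2 μ) :
    ENNReal.ofReal ⟪g, f⟫_ℝ ≤ eLpNorm g ⊤ μ * eLpNorm f 1 μ :=
  calc ENNReal.ofReal ⟪g, f⟫_ℝ ≤ ‖∫ x, (⇑g • ⇑f : X → ℝ) x ∂μ‖ₑ := by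
        rw [L2.inner_def]
        simpa [mul_comm] using Real.ofReal_le_enorm _
    _ ≤ ∫⁻ x, ‖(⇑g • ⇑f : X → ℝ) x‖ₑ ∂μ := enorm_integral_le_lintegral_enorm _
    _ = eLpNorm (⇑g • ⇑f : X → ℝ) 1 μ := eLpNorm_one_eq_lintegral_enorm.symm
    _ ≤ eLpNorm g ⊤ μ * eLpNorm f 1 μ :=
        eLpNorm_smul_le_eLpNorm_top_mul_eLpNorm 1 (Lp.aestronglyMeasurable f) g

theorem ofReal_inner_apply_self_le_opNorm1infty_mul {μ : Measure X}
    (T : Lp ℝ 2 μ →L[ℝ] Lp ℝ 2 μ) (f : Lp ℝ 2 μ) {s : Set X} (hs : μ s ≠ ⊤)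
    (hsupp : ∀ᵐ x ∂μ, x ∉ s → f x = 0) :
    ENNReal.ofReal ⟪T f, f⟫_ℝ ≤ opNorm1infty μ T * μ s * ‖f‖ₑ ^ 2 := by
  have hL1 : eLpNorm f 1 μ ^ 2 ≤ μ s * ‖f‖ₑ ^ 2 := by
    rw [Lp.enorm_def]
    exact eLpNorm_one_sq_le_measure_mul_eLpNorm_two_sq (Lp.aestronglyMeasurable f) hsupp
  have hfin : eLpNorm f 1 μ ≠ ⊤ := fun h => by
    simp [h, hs, ENNReal.mul_eq_top] at hL1
  calc ENNReal.ofReal ⟪T f, f⟫_ℝ ≤ eLpNorm (T f) ⊤ μ * eLpNorm f 1 μ :=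
        ofReal_inner_le_eLpNorm_top_mul_eLpNorm_one _ _
    _ ≤ opNorm1infty μ T * eLpNorm f 1 μ * eLpNorm f 1 μ := by
        gcongr; exact eLpNorm_apply_le_opNorm1infty_mul T f hfin
    _ = opNorm1infty μ T * eLpNorm f 1 μ ^ 2 := by ring
    _ ≤ opNorm1infty μ T * μ s * ‖f‖ₑ ^ 2 := by rw [mul_assoc]; gcongr

/-- `Pr l` stands for the spectral projection `χ_A([0,l])` and `ν g` for the spectral measure of
`g`, so that `E = ∫ x dν_f` is the energy `⟨Af, f⟩`. -/
theorem stmt_12_general (μ : Measure X)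
    (Pr : ℝ → (Lp ℝ 2 μ →L[ℝ] Lp ℝ 2 μ))
    (ν : Lp ℝ 2 μ → Measure ℝ)
    (hν0 : ∀ g, ν g (Set.Iio 0) = 0)
    (hν : ∀ g, ∀ l ≥ (0 : ℝ), ν g (Set.Iic l) = ENNReal.ofReal ⟪Pr l g, g⟫_ℝ)
    (hνtot : ∀ g, ν g Set.univ = ENNReal.ofReal (‖g‖ ^ 2))
    (F : ℝ → ℝ)
    (hF : ∀ l ≥ (0 : ℝ), opNorm1infty μ (Pr l) = ENNReal.ofReal (F l))
    (f : Lp ℝ 2 μ) (hf : f ≠ 0)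
    (Ω : Set X) (hΩfin : μ Ω ≠ ⊤)
    (hsupp : ∀ᵐ x ∂μ, x ∉ Ω → (f : X → ℝ) x = 0)
    (E : ℝ) (hEfin : Integrable (fun x => x) (ν f)) (hE : E = ∫ x, x ∂(ν f)) :
    1 ≤ 4 * (μ Ω).toReal * F (8 * E / ‖f‖ ^ 2) := by
  set N := ‖f‖ ^ 2
  have hN : 0 < N := by have := norm_pos_iff.2 hf; positivity
  have hE0 : 0 ≤ E := hE ▸ integral_nonneg_of_ae (ae_nonneg_of_measure_Iio_eq_zero (hν0 f))
  set l := 8 * E / N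
  have hl : 0 ≤ l := by positivity
  -- by Chebyshev, at most `N / 8` of the spectral mass `N` of `f` lies above `l`
  have hlow : ENNReal.ofReal (7 / 8 * N) ≤ ENNReal.ofReal ⟪Pr l f, f⟫_ℝ := by
    have h := measure_univ_sub_ofReal_le_measure_Iic (hν0 f) hEfin (c := N / 8) (by positivity)
    rw [hνtot, ← ENNReal.ofReal_sub _ (by positivity), ← hE, div_div_eq_mul_div, mul_comm E] at h
    rw [← hν f l hl]
    convert h using 2
    ring
  have hup : ENNReal.ofReal ⟪Pr l f, f⟫_ℝ ≤ ENNReal.ofReal (F l) * μ Ω * ENNReal.ofReal N := by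
    rw [← hF l hl, ENNReal.ofReal_pow (norm_nonneg f), ofReal_norm]
    exact ofReal_inner_apply_self_le_opNorm1infty_mul (Pr l) f hΩfin hsupp
  have hchain := hlow.trans hup
  have hFpos : 0 < F l := by
    by_contra! hF0
    rw [ENNReal.ofReal_of_nonpos hF0, zero_mul, zero_mul, nonpos_iff_eq_zero,
      ENNReal.ofReal_eq_zero] at hchain
    linarith
  rw [← ENNReal.ofReal_toReal hΩfin, ← ENNReal.ofReal_mul hFpos.le,
    ← ENNReal.ofReal_mul (by positivity), ENNReal.ofReal_le_ofReal_iff (by positivity)] at hchain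
  nlinarith

/-- The generalized Faber–Krahn inequality / uncertainty principle
(Theorem 2.2, inequality (34)).
The positive self-adjoint operator `A` on `L²(X,μ)` is encoded by its spectral
projections `Pr l = χ_A([0,l])` and the spectral measures `ν g`, with
`ν g ([0,l]) = ⟨Π_{[0,l]} g, g⟩`, `ν g (ℝ) = ‖g‖²`, and energy
`E(g) = ∫ x dν_g`.  With `F(λ) = ‖χ_A([0,λ])‖_{1,∞}` finite, every nonzero `f ∈ L²` of
finite energy supported in a domain `Ω` of finite measure satisfies
`4 μ(Ω) · F(8 E(f)/‖f‖₂²) ≥ 1`. -/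
theorem stmt_12 (μ : Measure X)
    (Pr : ℝ → (Lp ℝ 2 μ →L[ℝ] Lp ℝ 2 μ))
    (hproj : ∀ l, Pr l ∘L Pr l = Pr l)
    (hsymm : ∀ l f g, ⟪Pr l f, g⟫_ℝ = ⟪f, Pr l g⟫_ℝ)
    (hmono : ∀ l l', l ≤ l' → Pr l' ∘L Pr l = Pr l)
    (ν : Lp ℝ 2 μ → Measure ℝ)
    (hν0 : ∀ g, ν g (Set.Iio 0) = 0)
    (hν : ∀ g, ∀ l ≥ (0 : ℝ), ν g (Set.Iic l) = ENNReal.ofReal ⟪Pr l g, g⟫_ℝ)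
    (hνtot : ∀ g, ν g Set.univ = ENNReal.ofReal (‖g‖ ^ 2))
    (F : ℝ → ℝ)
    (hF : ∀ l ≥ (0 : ℝ), opNorm1infty μ (Pr l) = ENNReal.ofReal (F l))
    (f : Lp ℝ 2 μ) (hf : f ≠ 0)
    (Ω : Set X) (hΩmeas : MeasurableSet Ω) (hΩfin : μ Ω ≠ ⊤)
    (hsupp : ∀ᵐ x ∂μ, x ∉ Ω → (f : X → ℝ) x = 0)
    (E : ℝ) (hEfin : Integrable (fun x => x) (ν f)) (hE : E = ∫ x, x ∂(ν f)) :
    1 ≤ 4 * (μ Ω).toReal * F (8 * E / ‖f‖ ^ 2) :=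
  stmt_12_general μ Pr ν hν0 hν hνtot F hF f hf Ω hΩfin hsupp E hEfin hE
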